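/- arXiv:1004.2453 — 6 statements merged into one kernel-verified Lean document; each statement's English description precedes it below -/
import Mathlib

section
/- For every nonnegative integer n, ∑_{k=0}^{⌊n/2⌋} 2^{-2k} · C(n, 2k) · C(2k, k) = 2^{-n} · C(2n, n). -/
/-!
Write $(1+X)^{2n} = ((1+X^2) + 2X)^n$ and expand binomially. The term
$\binom{n}{m}(1+X^2)^m(2X)^{n-m}$ contributes $2^{n-m}\binom{n}{m}[X^m](1+X^2)^m$ to the coefficient
of $X^n$, and $[X^m](1+X^2)^m$ is $\binom{2k}{k}$ for $m = 2k$ and $0$ for odd $m$. Hence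
$\binom{2n}{n} = \sum_k 2^{n-2k}\binom{n}{2k}\binom{2k}{k}$; dividing by $2^n$ gives the identity.
-/

open Polynomial Finset

lemma sum_range_succ_ite_two_dvd {M : Type*} [AddCommMonoid M] (f : ℕ → M) (n : ℕ) :
    ∑ j ∈ range (n + 1), (if 2 ∣ j then f j else 0) = ∑ k ∈ range (n / 2 + 1), f (2 * k) := by
  rw [← sum_filter]
  refine sum_nbij' (· / 2) (2 * ·) ?_ ?_ ?_ ?_ ?_ <;> simp only [mem_filter, mem_range]
  · omega
  · omega
  · omega
  · omega
  · rintro j ⟨-, ⟨k, rfl⟩⟩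
    simp

lemma coeff_X_sq_add_one_pow (m : ℕ) :
    ((X ^ 2 + 1 : ℕ[X]) ^ m).coeff m = if 2 ∣ m then m.choose (m / 2) else 0 := by
  have hexpand : (X ^ 2 + 1 : ℕ[X]) ^ m = expand ℕ 2 ((X + 1) ^ m) := by simp
  rw [hexpand, coeff_expand two_pos, coeff_X_add_one_pow, Nat.cast_id]

lemma choose_two_mul_eq_sum (n : ℕ) :
    (2 * n).choose n =
      ∑ k ∈ range (n / 2 + 1), 2 ^ (n - 2 * k) * n.choose (2 * k) * (2 * k).choose k := by
  have hsq : (X + 1 : ℕ[X]) ^ 2 = (X ^ 2 + 1) + C 2 * X := by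
    simp only [map_ofNat]; ring
  have hterm : ∀ m ∈ range (n + 1),
      ((X ^ 2 + 1) ^ m * (C 2 * X) ^ (n - m) * (n.choose m : ℕ[X])).coeff n =
        if 2 ∣ m then 2 ^ (n - m) * n.choose m * m.choose (m / 2) else 0 := by
    intro m hm
    rw [mul_pow, ← C_pow, ← C_eq_natCast, coeff_mul_C, mul_left_comm, coeff_C_mul,
      coeff_mul_X_pow', if_pos (Nat.sub_le n m), Nat.sub_sub_self (mem_range_succ_iff.mp hm),
      coeff_X_sq_add_one_pow, Nat.cast_id]
    split_ifs <;> ring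
  rw [← Nat.cast_id ((2 * n).choose n), ← coeff_X_add_one_pow, pow_mul, hsq, add_pow,
    finsetSum_coeff, sum_congr rfl hterm, sum_range_succ_ite_two_dvd]
  simp only [Nat.mul_div_cancel_left _ two_pos]

theorem finite_sum_identity (n : ℕ) :
    ∑ k ∈ Finset.range (n / 2 + 1),
      (1 / 2 ^ (2 * k) : ℝ) * (n.choose (2 * k)) * ((2 * k).choose k) =
      (1 / 2 ^ n : ℝ) * ((2 * n).choose n) := by
  rw [choose_two_mul_eq_sum, Nat.cast_sum, mul_sum]
  refine sum_congr rfl fun k hk => ?_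
  have h2k : 2 * k ≤ n := by have := mem_range.mp hk; omega
  rw [← Nat.sub_add_cancel h2k]
  push_cast
  rw [Nat.add_sub_cancel, pow_add]
  field_simp
end

section
/- For all real s ≥ 0, the function f(s) = s · ∫₀^{π/2} (sin x)^s dx is strictly increasing on (0, ∞); in particular, for n ≥ 1, the ratio I_{2n}/I_{2n+1} of Wallis integrals satisfies 1 ≤ I_{2n}/I_{2n+1} ≤ 1 + 1/(2n). -/
/-!
The substitution `v = sin x ^ s` turns `s * ∫₀^{π/2} sin x ^ s dx` into `∫₀¹ tan x dv`, i.e. into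
`∫₀¹ tan (arcsin (v ^ (1/s))) dv`, and for each `v ∈ (0, 1)` this integrand is strictly increasing
in `s`. For the Wallis integrals, `I (m + 1) ≤ I m` holds pointwise, and the monotonicity at
`s = m` and `s = m + 1` gives `m * I m < (m + 1) * I (m + 1)`, i.e. `I m / I (m + 1) < 1 + 1 / m`.
-/

open Real Set MeasureTheory intervalIntegral

lemma sin_pos_of_mem_Ioo_pi_div_two {x : ℝ} (hx : x ∈ Ioo 0 (π / 2)) : 0 < sin x :=
  sin_pos_of_mem_Ioo (Ioo_subset_Ioo_right (half_le_self pi_pos.le) hx)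

lemma sin_nonneg_of_mem_Icc_pi_div_two {x : ℝ} (hx : x ∈ Icc 0 (π / 2)) : 0 ≤ sin x :=
  sin_nonneg_of_mem_Icc (Icc_subset_Icc_right (half_le_self pi_pos.le) hx)

lemma strictMonoOn_sin_rpow {s : ℝ} (hs : 0 < s) :
    StrictMonoOn (fun x => sin x ^ s) (Icc 0 (π / 2)) := by
  have hsub : Icc 0 (π / 2) ⊆ Icc (-(π / 2)) (π / 2) := Icc_subset_Icc_left (by linarith [pi_pos])
  exact fun x hx y hy hxy => rpow_lt_rpow (sin_nonneg_of_mem_Icc_pi_div_two hx)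
    (strictMonoOn_sin (hsub hx) (hsub hy) hxy) hs

lemma image_sin_rpow_Ioo {s : ℝ} (hs : 0 < s) :
    (fun x => sin x ^ s) '' Ioo 0 (π / 2) = Ioo 0 1 := by
  ext v
  constructor
  · rintro ⟨x, hx, rfl⟩
    refine ⟨rpow_pos_of_pos (sin_pos_of_mem_Ioo_pi_div_two hx) s, ?_⟩
    simpa using strictMonoOn_sin_rpow hs (Ioo_subset_Icc_self hx)
      ⟨by positivity, le_rfl⟩ hx.2
  · rintro ⟨hv0, hv1⟩
    have hy0 : 0 < v ^ s⁻¹ := rpow_pos_of_pos hv0 _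
    have hy1 : v ^ s⁻¹ < 1 := rpow_lt_one hv0.le hv1 (inv_pos.mpr hs)
    refine ⟨arcsin (v ^ s⁻¹), ⟨arcsin_pos.mpr hy0, arcsin_lt_pi_div_two.mpr hy1⟩, ?_⟩
    dsimp only
    rw [sin_arcsin (by linarith) hy1.le, rpow_inv_rpow hv0.le hs.ne']

/-- `tan x` written in terms of `v = sin x ^ s`, for `x ∈ (0, π / 2)`. -/
noncomputable def wallisKernel (s v : ℝ) : ℝ := tan (arcsin (v ^ s⁻¹))

lemma abs_deriv_smul_wallisKernel_sin_rpow {s x : ℝ} (hs : 0 < s) (hx : x ∈ Ioo 0 (π / 2)) :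
    |cos x * s * sin x ^ (s - 1)| • wallisKernel s (sin x ^ s) = s * sin x ^ s := by
  have hsin : 0 < sin x := sin_pos_of_mem_Ioo_pi_div_two hx
  have hcos : 0 < cos x := cos_pos_of_mem_Ioo ⟨by linarith [hx.1, pi_pos], hx.2⟩
  rw [smul_eq_mul, wallisKernel, rpow_rpow_inv hsin.le hs.ne',
    arcsin_sin (by linarith [hx.1, pi_pos]) hx.2.le, tan_eq_sin_div_cos,
    abs_of_pos (by positivity), rpow_sub_one hsin.ne']
  field_simp

lemma hasDerivWithinAt_sin_rpow_Ioo {s x : ℝ} (hx : x ∈ Ioo 0 (π / 2)) :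
    HasDerivWithinAt (fun x => sin x ^ s) (cos x * s * sin x ^ (s - 1)) (Ioo 0 (π / 2)) x :=
  ((hasDerivAt_sin x).rpow_const (Or.inl (sin_pos_of_mem_Ioo_pi_div_two hx).ne')).hasDerivWithinAt

lemma injOn_sin_rpow_Ioo {s : ℝ} (hs : 0 < s) : InjOn (fun x => sin x ^ s) (Ioo 0 (π / 2)) :=
  (strictMonoOn_sin_rpow hs).injOn.mono Ioo_subset_Icc_self

-- The kernel is unbounded near `v = 1`; its integrability is pulled back through the substitution.
lemma intervalIntegrable_wallisKernel {s : ℝ} (hs : 0 < s) :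
    IntervalIntegrable (wallisKernel s) volume 0 1 := by
  rw [intervalIntegrable_iff_integrableOn_Ioo_of_le zero_le_one, ← image_sin_rpow_Ioo hs,
    integrableOn_image_iff_integrableOn_abs_deriv_smul measurableSet_Ioo
      (fun _ => hasDerivWithinAt_sin_rpow_Ioo) (injOn_sin_rpow_Ioo hs),
    integrableOn_congr_fun (fun x hx => abs_deriv_smul_wallisKernel_sin_rpow hs hx) measurableSet_Ioo]
  have : Continuous fun x => s * sin x ^ s := by fun_prop (disch := exact hs.le)
  exact this.integrableOn_Icc.mono_set Ioo_subset_Icc_self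

lemma integral_wallisKernel {s : ℝ} (hs : 0 < s) :
    ∫ v in 0..1, wallisKernel s v = s * ∫ x in 0..π / 2, sin x ^ s := by
  simp only [integral_of_le zero_le_one, integral_of_le (by positivity : 0 ≤ π / 2),
    integral_Ioc_eq_integral_Ioo]
  rw [← image_sin_rpow_Ioo hs, integral_image_eq_integral_abs_deriv_smul measurableSet_Ioo
      (fun _ => hasDerivWithinAt_sin_rpow_Ioo) (injOn_sin_rpow_Ioo hs),
    setIntegral_congr_fun measurableSet_Ioo (fun x hx => abs_deriv_smul_wallisKernel_sin_rpow hs hx),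
    MeasureTheory.integral_const_mul]

lemma strictMonoOn_tan_arcsin : StrictMonoOn (fun y => tan (arcsin y)) (Ioo (-1) 1) := by
  intro x hx y hy hxy
  have mem : ∀ z ∈ Ioo (-1 : ℝ) 1, arcsin z ∈ Ioo (-(π / 2)) (π / 2) := fun z hz =>
    ⟨neg_pi_div_two_lt_arcsin.mpr hz.1, arcsin_lt_pi_div_two.mpr hz.2⟩
  exact strictMonoOn_tan (mem x hx) (mem y hy)
    (strictMonoOn_arcsin (Ioo_subset_Icc_self hx) (Ioo_subset_Icc_self hy) hxy)

lemma wallisKernel_lt_wallisKernel {s t v : ℝ} (hs : 0 < s) (hst : s < t) (hv : v ∈ Ioo 0 1) :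
    wallisKernel s v < wallisKernel t v := by
  have mem : ∀ r : ℝ, 0 < r → v ^ r⁻¹ ∈ Ioo (-1) 1 := fun r hr =>
    ⟨by linarith [rpow_pos_of_pos hv.1 r⁻¹], rpow_lt_one hv.1.le hv.2 (inv_pos.mpr hr)⟩
  exact strictMonoOn_tan_arcsin (mem s hs) (mem t (hs.trans hst))
    (rpow_lt_rpow_of_exponent_gt hv.1 hv.2 (inv_strictAnti₀ hs hst))

lemma strictMonoOn_mul_integral_sin_rpow :
    StrictMonoOn (fun s : ℝ => s * ∫ x in 0..π / 2, sin x ^ s) (Ioi 0) := by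
  intro s hs t ht hst
  have hpos := intervalIntegral_pos_of_pos_on
    ((intervalIntegrable_wallisKernel ht).sub (intervalIntegrable_wallisKernel hs))
    (fun v hv => sub_pos.mpr (wallisKernel_lt_wallisKernel hs hst hv)) zero_lt_one
  rwa [integral_sub (intervalIntegrable_wallisKernel ht) (intervalIntegrable_wallisKernel hs),
    integral_wallisKernel hs, integral_wallisKernel ht, sub_pos] at hpos

lemma integral_sin_pow_pi_div_two_pos (m : ℕ) : 0 < ∫ x in 0..π / 2, sin x ^ m :=
  intervalIntegral_pos_of_pos_on ((continuous_sin.pow m).intervalIntegrable _ _)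
    (fun x hx => pow_pos (sin_pos_of_mem_Ioo_pi_div_two hx) m)
    (by positivity)

lemma integral_sin_pow_succ_le_pi_div_two (m : ℕ) :
    ∫ x in 0..π / 2, sin x ^ (m + 1) ≤ ∫ x in 0..π / 2, sin x ^ m :=
  integral_mono_on (by positivity) ((continuous_sin.pow _).intervalIntegrable _ _)
    ((continuous_sin.pow _).intervalIntegrable _ _) fun x hx =>
      pow_le_pow_of_le_one (sin_nonneg_of_mem_Icc_pi_div_two hx)
        (sin_le_one x) m.le_succ

lemma one_le_integral_sin_pow_div_succ (m : ℕ) :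
    1 ≤ (∫ x in 0..π / 2, sin x ^ m) / ∫ x in 0..π / 2, sin x ^ (m + 1) := by
  rw [one_le_div (integral_sin_pow_pi_div_two_pos _)]
  exact integral_sin_pow_succ_le_pi_div_two m

lemma integral_sin_pow_div_succ_lt {m : ℕ} (hm : 0 < m) :
    (∫ x in 0..π / 2, sin x ^ m) / ∫ x in 0..π / 2, sin x ^ (m + 1) < 1 + 1 / m := by
  have hlt := strictMonoOn_mul_integral_sin_rpow (mem_Ioi.mpr (Nat.cast_pos.mpr hm))
    (mem_Ioi.mpr (Nat.cast_pos.mpr m.succ_pos)) (Nat.cast_lt.mpr m.lt_succ_self)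
  simp only [rpow_natCast] at hlt
  push_cast at hlt
  have hI := integral_sin_pow_pi_div_two_pos (m + 1)
  have hm' : (0 : ℝ) < m := Nat.cast_pos.mpr hm
  rw [div_lt_iff₀ hI, one_add_div hm'.ne', div_mul_eq_mul_div, lt_div_iff₀ hm']
  linarith

theorem sin_pow_integral_monotone_and_ratio_bounds :
    StrictMonoOn (fun s : ℝ => s * ∫ x in (0:ℝ)..(π / 2), sin x ^ s) (Set.Ioi 0) ∧
    ∀ n : ℕ, 1 ≤ n →
      1 ≤ (∫ x in (0:ℝ)..(π / 2), sin x ^ (2 * n)) /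
            (∫ x in (0:ℝ)..(π / 2), sin x ^ (2 * n + 1)) ∧
      (∫ x in (0:ℝ)..(π / 2), sin x ^ (2 * n)) /
            (∫ x in (0:ℝ)..(π / 2), sin x ^ (2 * n + 1)) ≤ 1 + 1 / (2 * n) := by
  refine ⟨strictMonoOn_mul_integral_sin_rpow, fun n hn => ⟨one_le_integral_sin_pow_div_succ _, ?_⟩⟩
  exact_mod_cast (integral_sin_pow_div_succ_lt (by omega : 0 < 2 * n)).le
end

section
/- For |x| < 1/2, ∑_{k=0}^∞ C(2k,k) x^(2k)/(2k+1) = arcsin(2x)/(2x) (with the convention that the right-hand side equals 1 at x = 0). -/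
/-!
By the binomial series, `∑ C(2k,k) tᵏ = (1 - 4t)^(-1/2)` for `|t| < 1/4`. Putting `t = x²` and
integrating termwise, `∑ C(2k,k) x^(2k+1)/(2k+1)` has derivative `1/√(1 - 4x²)` on `|x| < 1/2`, as
does `arcsin (2x) / 2`; both vanish at `0`, so they agree, and dividing by `x` gives the theorem.
-/

open Real Set

theorem ascPochhammer_eval_half (n : ℕ) :
    (ascPochhammer ℝ n).eval (1 / 2) = n.factorial * n.centralBinom / 4 ^ n := by
  induction n with
  | zero => simp
  | succ n ih =>
    have h : ((n + 1 : ℕ) : ℝ) * (n + 1).centralBinom = 2 * (2 * n + 1) * n.centralBinom := by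
      exact_mod_cast Nat.succ_mul_centralBinom_succ n
    rw [ascPochhammer_succ_eval, ih, Nat.factorial_succ, Nat.cast_mul, pow_succ,
      div_mul_eq_mul_div, div_eq_div_iff (by positivity) (by positivity)]
    linear_combination (-(4 : ℝ) ^ n * n.factorial) * h

theorem Ring.choose_half_add_natCast_sub_one (n : ℕ) :
    Ring.choose ((1 / 2 : ℝ) + n - 1) n = n.centralBinom / 4 ^ n := by
  have h := Ring.factorial_nsmul_multichoose_eq_ascPochhammer (1 / 2 : ℝ) n
  rw [Ring.multichoose_eq, Polynomial.ascPochhammer_smeval_eq_eval, ascPochhammer_eval_half,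
    nsmul_eq_mul] at h
  have : (n.factorial : ℝ) ≠ 0 := by positivity
  field_simp at h ⊢
  linear_combination h

theorem hasSum_centralBinom_mul_pow {x : ℝ} (hx : |x| < 1 / 4) :
    HasSum (fun n ↦ (n.centralBinom : ℝ) * x ^ n) (1 / √(1 - 4 * x)) := by
  have h4x : 4 * x ∈ Metric.eball (0 : ℝ) 1 := by
    rw [Metric.mem_eball, edist_zero_right, ← ofReal_norm, ENNReal.ofReal_lt_one, norm_mul]
    norm_num
    linarith
  have h := (one_div_one_sub_rpow_hasFPowerSeriesOnBall_zero (1 / 2)).hasSum h4x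
  simp only [FormalMultilinearSeries.ofScalars_apply_eq, Ring.choose_half_add_natCast_sub_one,
    smul_eq_mul, zero_add, ← sqrt_eq_rpow] at h
  refine h.congr_fun fun n ↦ ?_
  rw [mul_pow]
  field_simp

theorem hasDerivAt_tsum_centralBinom_mul_pow_div {x : ℝ} (hx : |x| < 1 / 2) :
    HasDerivAt (fun y ↦ ∑' k : ℕ, (k.centralBinom : ℝ) * y ^ (2 * k + 1) / (2 * k + 1))
      (1 / √(1 - 4 * x ^ 2)) x := by
  obtain ⟨r, hxr, hr⟩ := exists_between hx
  have hr2 : |r ^ 2| < 1 / 4 := by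
    rw [abs_of_nonneg (sq_nonneg r)]
    nlinarith [abs_nonneg x]
  have hx2 : |x ^ 2| < 1 / 4 := by
    rw [abs_of_nonneg (sq_nonneg x), ← sq_abs]
    nlinarith [abs_nonneg x]
  have hterm (k : ℕ) (y : ℝ) :
      HasDerivAt (fun y ↦ (k.centralBinom : ℝ) * y ^ (2 * k + 1) / (2 * k + 1))
        (k.centralBinom * y ^ (2 * k)) y := by
    refine (((hasDerivAt_pow (2 * k + 1) y).const_mul _).div_const _).congr_deriv ?_
    rw [Nat.add_sub_cancel]
    push_cast
    field_simp
  have hbound (k : ℕ) (y : ℝ) (hy : y ∈ Ioo (-r) r) :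
      ‖(k.centralBinom : ℝ) * y ^ (2 * k)‖ ≤ k.centralBinom * (r ^ 2) ^ k := by
    rw [norm_mul, Real.norm_natCast, norm_pow, ← pow_mul, Real.norm_eq_abs]
    gcongr
    exact (abs_lt.2 hy).le
  have h0r : (0 : ℝ) ∈ Ioo (-r) r := abs_lt.1 (by simpa using (abs_nonneg x).trans_lt hxr)
  refine (hasDerivAt_tsum_of_isPreconnected (hasSum_centralBinom_mul_pow hr2).summable isOpen_Ioo
    (convex_Ioo _ _).isPreconnected (fun k y _ ↦ hterm k y) hbound h0r
    (summable_zero.congr fun k ↦ by simp) (abs_lt.1 hxr)).congr_deriv ?_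
  simp_rw [pow_mul]
  exact (hasSum_centralBinom_mul_pow hx2).tsum_eq

theorem tsum_centralBinom_mul_pow_div_eq_arcsin {x : ℝ} (hx : |x| < 1 / 2) :
    ∑' k : ℕ, (k.centralBinom : ℝ) * x ^ (2 * k + 1) / (2 * k + 1) = arcsin (2 * x) / 2 := by
  have hseries (y : ℝ) (hy : y ∈ Ioo (-(1 / 2)) (1 / 2)) :=
    hasDerivAt_tsum_centralBinom_mul_pow_div (abs_lt.2 hy)
  have harcsin (y : ℝ) (hy : y ∈ Ioo (-(1 / 2)) (1 / 2)) :
      HasDerivAt (fun y ↦ arcsin (2 * y) / 2) (1 / √(1 - 4 * y ^ 2)) y := by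
    refine (((hasDerivAt_arcsin (by linarith [hy.1]) (by linarith [hy.2])).comp y
      ((hasDerivAt_id' y).const_mul 2)).div_const 2).congr_deriv ?_
    ring_nf
  exact isOpen_Ioo.eqOn_of_deriv_eq isPreconnected_Ioo
    (fun y hy ↦ (hseries y hy).differentiableAt.differentiableWithinAt)
    (fun y hy ↦ (harcsin y hy).differentiableAt.differentiableWithinAt)
    (fun y hy ↦ (hseries y hy).deriv.trans (harcsin y hy).deriv.symm)
    (by norm_num : (0 : ℝ) ∈ Ioo (-(1 / 2)) (1 / 2)) (by simp) (abs_lt.1 hx)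

theorem central_binomial_arcsin_series (x : ℝ) (hx : |x| < 1 / 2) :
    ∑' k : ℕ, ((2 * k).choose k : ℝ) * x ^ (2 * k) / (2 * k + 1) =
      if x = 0 then 1 else arcsin (2 * x) / (2 * x) := by
  simp_rw [← Nat.centralBinom_eq_two_mul_choose]
  split_ifs with hx0
  · subst hx0
    rw [tsum_eq_single 0 fun k hk ↦ by simp [hk]]
    simp
  · rw [div_mul_eq_div_div, ← tsum_centralBinom_mul_pow_div_eq_arcsin hx, ← tsum_div_const]
    congr 1 with k
    field_simp
    ring
end

section
/- Let q₁, ..., qₙ be distinct complex numbers with positive real part. Then (2/π) ∫₀^∞ ∏_{k=1}^n (x² + q_k²)^{-1} dx = ∑_{k=1}^n (1/q_k) ∏_{j≠k} 1/(q_j² − q_k²). -/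
/-!
Since the `q k ^ 2` are distinct, Lagrange's barycentric identity with nodes `-q k ^ 2`, evaluated
at `x ^ 2`, splits the integrand into partial fractions `∑ k, w k * (x ^ 2 + q k ^ 2)⁻¹` with
`w k = ∏ j ≠ k, (q j ^ 2 - q k ^ 2)⁻¹`. Each term integrates to `π / (2 q)`: with `a = I q` in
the upper half-plane, `(log (x - a) - log (x + a)) / (2 a)` is an antiderivative of
`(x ^ 2 - a ^ 2)⁻¹` that tends to `0` at infinity and equals `-π I / (2 a)` at `0`.
-/

open MeasureTheory Real
open Filter Topology Asymptotics Set

theorem Complex.ofReal_add_mem_slitPlane {z : ℂ} (hz : z.im ≠ 0) (x : ℝ) :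
    (x : ℂ) + z ∈ slitPlane :=
  mem_slitPlane_iff.2 (Or.inr (by simpa using hz))

theorem Complex.ofReal_add_ne_zero {z : ℂ} (hz : z.im ≠ 0) (x : ℝ) : (x : ℂ) + z ≠ 0 :=
  slitPlane_ne_zero (ofReal_add_mem_slitPlane hz x)

theorem Complex.ofReal_sq_sub_sq_ne_zero {a : ℂ} (ha : a.im ≠ 0) (x : ℝ) :
    (x : ℂ) ^ 2 - a ^ 2 ≠ 0 := by
  rw [sq_sub_sq, sub_eq_add_neg]
  exact mul_ne_zero (ofReal_add_ne_zero ha x) (ofReal_add_ne_zero (by simpa using ha) x)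

theorem Complex.ofReal_sq_add_sq_ne_zero {q : ℂ} (hq : q.re ≠ 0) (x : ℝ) :
    (x : ℂ) ^ 2 + q ^ 2 ≠ 0 := by
  simpa [mul_pow] using ofReal_sq_sub_sq_ne_zero (a := I * q) (by simpa using hq) x

theorem Complex.tendsto_log_ofReal_add_sub_log_ofReal (c : ℂ) :
    Tendsto (fun x : ℝ => log (x + c) - log x) atTop (𝓝 0) := by
  have hlim : Tendsto (fun x : ℝ => 1 + c * (x : ℂ)⁻¹) atTop (𝓝 1) := by
    have h : Tendsto (fun x : ℝ => (x : ℂ)⁻¹) atTop (𝓝 0) := by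
      simpa [Function.comp_def] using (continuous_ofReal.tendsto 0).comp tendsto_inv_atTop_zero
    simpa using (h.const_mul c).const_add 1
  have hlog := hlim.clog one_mem_slitPlane
  rw [log_one] at hlog
  refine hlog.congr' ?_
  filter_upwards [Ioi_mem_atTop 0, hlim.eventually_ne one_ne_zero] with x hx hne
  have hx0 : (x : ℂ) ≠ 0 := by exact_mod_cast hx.ne'
  rw [show (x : ℂ) + c = x * (1 + c * (x : ℂ)⁻¹) by field_simp, log_ofReal_mul hx hne,
    ofReal_log hx.le]
  ring

theorem Complex.tendsto_log_ofReal_add_sub_log_ofReal_add (c d : ℂ) :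
    Tendsto (fun x : ℝ => log (x + c) - log (x + d)) atTop (𝓝 0) := by
  simpa using (tendsto_log_ofReal_add_sub_log_ofReal c).sub
    (tendsto_log_ofReal_add_sub_log_ofReal d)

theorem Complex.hasDerivAt_log_ofReal_add {c : ℂ} (hc : c.im ≠ 0) (x : ℝ) :
    HasDerivAt (fun y : ℝ => log (y + c)) ((x : ℂ) + c)⁻¹ x := by
  simpa using ((hasDerivAt_id x).ofReal_comp.add_const c).clog_real
    (ofReal_add_mem_slitPlane hc x)

theorem integrableOn_Ioi_inv_ofReal_sq_sub_sq {a : ℂ} (ha : a.im ≠ 0) :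
    IntegrableOn (fun x : ℝ => ((x : ℂ) ^ 2 - a ^ 2)⁻¹) (Ioi 0) := by
  have hcont : Continuous (fun x : ℝ => ((x : ℂ) ^ 2 - a ^ 2)⁻¹) :=
    (by fun_prop : Continuous fun x : ℝ => (x : ℂ) ^ 2 - a ^ 2).inv₀
      (Complex.ofReal_sq_sub_sq_ne_zero ha)
  have hequiv : (fun x : ℝ => (x : ℂ) ^ 2 - a ^ 2) ~[atTop] fun x => (x : ℂ) ^ 2 := by
    refine IsEquivalent.refl.sub_isLittleO (isLittleO_const_left.2 (Or.inr ?_))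
    simp [Function.comp_def]
  have hrpow : (fun x : ℝ => ((x : ℂ) ^ 2)⁻¹) =O[atTop] fun x => x ^ (-2 : ℝ) := by
    refine (IsTheta.of_norm_eventuallyEq ?_).isBigO
    filter_upwards [eventually_gt_atTop 0] with x hx
    simp [Real.rpow_neg hx.le, abs_of_pos hx]
  exact ((hcont.locallyIntegrable.locallyIntegrableOn _).integrableOn_of_isBigO_atTop
    (hequiv.inv.isBigO.trans hrpow) (integrableAtFilter_rpow_atTop_iff.2 (by norm_num))).mono_set
    Ioi_subset_Ici_self

theorem integral_Ioi_inv_ofReal_sq_sub_sq {a : ℂ} (ha : 0 < a.im) :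
    ∫ x in Ioi (0 : ℝ), ((x : ℂ) ^ 2 - a ^ 2)⁻¹ = π * Complex.I / (2 * a) := by
  have ha0 : a ≠ 0 := by rintro rfl; simp at ha
  have hma : (-a).im ≠ 0 := by simpa using ha.ne'
  set F : ℝ → ℂ := fun x => (2 * a)⁻¹ * (Complex.log (x + -a) - Complex.log (x + a))
  have hderiv (x : ℝ) : HasDerivAt F ((x : ℂ) ^ 2 - a ^ 2)⁻¹ x := by
    refine (((Complex.hasDerivAt_log_ofReal_add hma x).sub
      (Complex.hasDerivAt_log_ofReal_add ha.ne' x)).const_mul (2 * a)⁻¹).congr_deriv ?_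
    have h₁ := Complex.ofReal_add_ne_zero hma x
    have h₂ := Complex.ofReal_add_ne_zero ha.ne' x
    simp only [← sub_eq_add_neg] at h₁ ⊢
    rw [sq_sub_sq]
    field_simp
    ring
  have htop : Tendsto F atTop (𝓝 0) := by
    simpa only [mul_zero] using
      (Complex.tendsto_log_ofReal_add_sub_log_ofReal_add (-a) a).const_mul (2 * a)⁻¹
  -- `log (-a) = log a - π I` because `arg (-a) = arg a - π` in the upper half-plane.
  have hF0 : F 0 = -(π * Complex.I / (2 * a)) := by
    have hlog : Complex.log (-a) = Complex.log a - π * Complex.I := by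
      rw [Complex.log, Complex.log, norm_neg, Complex.arg_neg_eq_arg_sub_pi_of_im_pos ha]
      push_cast
      ring
    simp only [F, Complex.ofReal_zero, zero_add, hlog]
    field_simp
    ring
  rw [integral_Ioi_of_hasDerivAt_of_tendsto (hderiv 0).continuousAt.continuousWithinAt
    (fun x _ => hderiv x) (integrableOn_Ioi_inv_ofReal_sq_sub_sq ha.ne') htop, hF0]
  ring

theorem integrableOn_Ioi_inv_ofReal_sq_add_sq {q : ℂ} (hq : q.re ≠ 0) :
    IntegrableOn (fun x : ℝ => ((x : ℂ) ^ 2 + q ^ 2)⁻¹) (Ioi 0) := by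
  simpa [mul_pow] using
    integrableOn_Ioi_inv_ofReal_sq_sub_sq (a := Complex.I * q) (by simpa using hq)

theorem integral_Ioi_inv_ofReal_sq_add_sq {q : ℂ} (hq : 0 < q.re) :
    ∫ x in Ioi (0 : ℝ), ((x : ℂ) ^ 2 + q ^ 2)⁻¹ = π / (2 * q) := by
  have hq0 : q ≠ 0 := fun h => by simp [h] at hq
  have h := integral_Ioi_inv_ofReal_sq_sub_sq (a := Complex.I * q) (by simpa using hq)
  simp only [mul_pow, Complex.I_sq, neg_one_mul, sub_neg_eq_add] at h
  rw [h]
  field_simp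

theorem Lagrange.inv_prod_sub_eq_sum_nodalWeight_mul_inv {F ι : Type*} [Field F]
    [DecidableEq ι] {s : Finset ι} {v : ι → F} {x : F} (hvs : Set.InjOn v s) (hs : s.Nonempty)
    (hx : ∀ i ∈ s, x ≠ v i) :
    (∏ i ∈ s, (x - v i))⁻¹ = ∑ i ∈ s, nodalWeight s v i * (x - v i)⁻¹ := by
  refine inv_eq_of_mul_eq_one_right ?_
  simpa [interpolate_one hvs hs, eval_nodal] using (eval_interpolate_not_at_node 1 hx).symm

theorem Gn_partial_fractions (n : ℕ) (q : Fin n → ℂ)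
    (hre : ∀ k, 0 < (q k).re)
    (hdist : ∀ j k, j ≠ k → q j ^ 2 ≠ q k ^ 2) :
    (2 / (π:ℂ)) * ∫ x in Set.Ioi (0:ℝ), ∏ k, ((x:ℂ) ^ 2 + q k ^ 2)⁻¹ =
      ∑ k, (q k)⁻¹ * ∏ j ∈ Finset.univ.erase k, (q j ^ 2 - q k ^ 2)⁻¹ := by
  -- For `n = 0` the integrand `1` is not integrable, so both sides are `0`.
  rcases isEmpty_or_nonempty (Fin n) with hn | hn
  · simp [measureReal_def]
  set v : Fin n → ℂ := fun k => -q k ^ 2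
  have hv : Set.InjOn v (Finset.univ : Finset (Fin n)) := fun j _ k _ h =>
    by_contra fun hjk => hdist j k hjk (neg_injective h)
  have hpf (x : ℝ) : ∏ k, ((x : ℂ) ^ 2 + q k ^ 2)⁻¹ =
      ∑ k, Lagrange.nodalWeight Finset.univ v k * ((x : ℂ) ^ 2 + q k ^ 2)⁻¹ := by
    have hx : ∀ k ∈ Finset.univ, (x : ℂ) ^ 2 ≠ v k := fun k _ => by
      simpa [v, eq_neg_iff_add_eq_zero] using Complex.ofReal_sq_add_sq_ne_zero (hre k).ne' x
    simpa [v, Finset.prod_inv_distrib] using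
      Lagrange.inv_prod_sub_eq_sum_nodalWeight_mul_inv hv Finset.univ_nonempty hx
  simp_rw [hpf]
  rw [integral_finsetSum _ fun k _ =>
    (integrableOn_Ioi_inv_ofReal_sq_add_sq (hre k).ne').const_mul _, Finset.mul_sum]
  refine Finset.sum_congr rfl fun k _ => ?_
  have hq0 : q k ≠ 0 := fun h => by simpa [h] using hre k
  have hπ : (π : ℂ) ≠ 0 := by exact_mod_cast pi_ne_zero
  simp only [integral_const_mul, integral_Ioi_inv_ofReal_sq_add_sq (hre k), Lagrange.nodalWeight,
    v, neg_sub_neg]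
  field_simp
end

section
/- For every nonnegative integer n, (2/π) ∫₀^∞ ∏_{j=1}^{n+1} 1/(x² + j²) dx = 1/((2n+1) · n! · (n+1)!). -/
/-!
Put `y = x²`. The factors `(y + j²)⁻¹` have the distinct poles `-j²`, so by Lagrange
interpolation of the constant `1` the product splits into partial fractions
`∑ⱼ wⱼ / (x² + j²)` with barycentric weights
`wⱼ = ∏_{k ≠ j} (k² - j²)⁻¹ = (-1)^(j-1) 2j² / ((m-j)! (m+j)!)`, where `m = n + 1`.
Each fraction integrates to `π / (2j)`, and the resulting alternating sum telescopes against
`(-1)^(j-1) (2j-1) / ((2m-1) (m-j)! (m+j-1)!)`.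
-/

open MeasureTheory Real Finset Nat

theorem Lagrange.prod_inv_sub_eq_sum_nodalWeight_mul_inv_sub {F ι : Type*} [Field F]
    [DecidableEq ι] {s : Finset ι} {v : ι → F} {x : F} (hvs : Set.InjOn v s) (hs : s.Nonempty)
    (hx : ∀ i ∈ s, x ≠ v i) :
    ∏ i ∈ s, (x - v i)⁻¹ = ∑ i ∈ s, nodalWeight s v i * (x - v i)⁻¹ := by
  have h := eval_interpolate_not_at_node (1 : ι → F) hx
  simp only [interpolate_one hvs hs, Polynomial.eval_one, eval_nodal, Pi.one_apply,
    mul_one] at h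
  rw [prod_inv_distrib]
  exact inv_eq_of_mul_eq_one_right h.symm

theorem inv_sq_add_sq_eq {a : ℝ} (ha : a ≠ 0) (x : ℝ) :
    (x ^ 2 + a ^ 2)⁻¹ = (a ^ 2)⁻¹ * (1 + (a⁻¹ * x) ^ 2)⁻¹ := by
  field_simp
  ring

theorem integrable_inv_sq_add_sq {a : ℝ} (ha : a ≠ 0) :
    Integrable fun x : ℝ => (x ^ 2 + a ^ 2)⁻¹ := by
  simp_rw [inv_sq_add_sq_eq ha]
  exact (integrable_inv_one_add_sq.comp_mul_left' (inv_ne_zero ha)).const_mul _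

theorem integral_Ioi_inv_sq_add_sq {a : ℝ} (ha : 0 < a) :
    ∫ x in Set.Ioi (0 : ℝ), (x ^ 2 + a ^ 2)⁻¹ = π / (2 * a) := by
  have h := integral_comp_mul_left_Ioi (fun y : ℝ => (1 + y ^ 2)⁻¹) 0 (inv_pos.mpr ha)
  simp only [mul_zero, integral_Ioi_inv_one_add_sq, arctan_zero, sub_zero, smul_eq_mul,
    inv_inv] at h
  simp_rw [inv_sq_add_sq_eq ha.ne', integral_const_mul, h]
  field_simp

theorem prod_range_natCast_sub (i : ℕ) :
    ∏ k ∈ range i, ((k : ℝ) - i) = (-1) ^ i * i ! := by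
  have h : (-1 : ℝ) ^ i * i ! = ∏ k ∈ range i, -((k : ℝ) + 1) := by
    rw [prod_neg, card_range, ← prod_range_add_one_eq_factorial]
    push_cast
    rfl
  rw [h, ← prod_range_reflect]
  refine prod_congr rfl fun k hk => ?_
  rw [mem_range] at hk
  push_cast [Nat.sub_sub, Nat.cast_sub (by omega : 1 + k ≤ i)]
  ring

theorem prod_Ico_natCast_sub (i N : ℕ) :
    ∏ k ∈ Ico (i + 1) N, ((k : ℝ) - i) = (N - 1 - i)! := by
  rw [prod_Ico_eq_prod_range, ← prod_range_add_one_eq_factorial, Nat.cast_prod]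
  refine prod_congr (by congr 1; omega) fun k _ => ?_
  push_cast
  ring

theorem range_erase_eq_range_union_Ico {N i : ℕ} (hi : i < N) :
    (range N).erase i = range i ∪ Ico (i + 1) N := by
  ext k
  simp only [mem_erase, mem_range, mem_union, mem_Ico]
  omega

theorem prod_range_erase_natCast_sub {N i : ℕ} (hi : i < N) :
    ∏ k ∈ (range N).erase i, ((k : ℝ) - i) = (-1) ^ i * i ! * (N - 1 - i)! := by
  rw [range_erase_eq_range_union_Ico hi, prod_union, prod_range_natCast_sub,
    prod_Ico_natCast_sub]
  exact disjoint_left.mpr fun k hk hk' => by simp only [mem_range, mem_Ico] at hk hk'; omega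

theorem factorial_mul_prod_range_natCast_add (c N : ℕ) :
    c ! * ∏ k ∈ range N, ((c : ℝ) + 1 + k) = (c + N)! := by
  rw [← Nat.factorial_mul_ascFactorial, Nat.ascFactorial_eq_prod_range]
  push_cast
  rfl

theorem injective_neg_sq_succ : Function.Injective fun k : ℕ => -((k : ℝ) + 1) ^ 2 := by
  intro a b h
  have h' : (a : ℝ) + 1 = b + 1 :=
    (pow_left_inj₀ (by positivity) (by positivity) two_ne_zero).mp (neg_inj.mp h)
  exact_mod_cast add_right_cancel h'

theorem nodalWeight_neg_sq_succ {n i : ℕ} (hi : i ≤ n) :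
    Lagrange.nodalWeight (range (n + 1)) (fun k : ℕ => -((k : ℝ) + 1) ^ 2) i
      = (-1) ^ i * (2 * ((i : ℝ) + 1) ^ 2) / ((n - i)! * (n + i + 2)!) := by
  have hi' : i ∈ range (n + 1) := mem_range.mpr (Nat.lt_add_one_iff.mpr hi)
  have hsub := prod_range_erase_natCast_sub (mem_range.mp hi')
  have hadd := factorial_mul_prod_range_natCast_add (i + 1) (n + 1)
  rw [← mul_prod_erase _ _ hi'] at hadd
  have hfactor : ∀ k : ℕ, -((i : ℝ) + 1) ^ 2 - -((k : ℝ) + 1) ^ 2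
      = ((k : ℝ) - i) * (((i + 1 : ℕ) : ℝ) + 1 + k) := fun k => by push_cast; ring
  rw [Lagrange.nodalWeight, prod_inv_distrib]
  simp only [hfactor, prod_mul_distrib, hsub]
  rw [show i + 1 + (n + 1) = n + i + 2 by omega, Nat.factorial_succ] at hadd
  rw [show n + 1 - 1 - i = n - i by omega, ← hadd]
  push_cast
  simp only [mul_inv, ← inv_pow, inv_neg_one]
  field_simp
  ring

theorem prod_inv_sq_add_sq_succ_eq_sum (n : ℕ) (x : ℝ) :
    ∏ i ∈ range (n + 1), (x ^ 2 + ((i : ℝ) + 1) ^ 2)⁻¹ =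
      ∑ i ∈ range (n + 1), Lagrange.nodalWeight (range (n + 1))
        (fun k : ℕ => -((k : ℝ) + 1) ^ 2) i * (x ^ 2 + ((i : ℝ) + 1) ^ 2)⁻¹ := by
  simpa only [sub_neg_eq_add] using Lagrange.prod_inv_sub_eq_sum_nodalWeight_mul_inv_sub
    injective_neg_sq_succ.injOn nonempty_range_add_one
    (x := x ^ 2) fun i _ => ne_of_gt ((neg_neg_of_pos (by positivity)).trans_le (sq_nonneg x))

theorem sum_range_neg_one_pow_mul_div_factorial (n : ℕ) :
    ∑ i ∈ range (n + 1), (-1 : ℝ) ^ i * (2 * ((i : ℝ) + 1)) / ((n - i)! * (n + i + 2)!) =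
      1 / ((2 * n + 1) * n ! * (n + 1)! : ℝ) := by
  set f : ℕ → ℝ := fun i => (-1) ^ i * (2 * i + 1) / ((2 * n + 1) * (n - i)! * (n + i + 1)!)
    with hf
  have hstep : ∀ i ∈ range n,
      (-1 : ℝ) ^ i * (2 * ((i : ℝ) + 1)) / ((n - i)! * (n + i + 2)!) = f i - f (i + 1) := by
    intro i hi
    obtain ⟨d, rfl⟩ := Nat.exists_eq_add_of_lt (mem_range.mp hi)
    simp only [hf, show i + d + 1 - i = d + 1 by omega, show i + d + 1 - (i + 1) = d by omega,
      show i + d + 1 + i + 2 = (i + d + 1 + i + 1) + 1 by omega,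
      show i + d + 1 + (i + 1) + 1 = (i + d + 1 + i + 1) + 1 by omega,
      Nat.factorial_succ d, Nat.factorial_succ (i + d + 1 + i + 1)]
    push_cast
    field_simp
    ring
  have hlast : (-1 : ℝ) ^ n * (2 * ((n : ℝ) + 1)) / ((n - n)! * (n + n + 2)!) = f n := by
    simp only [hf, Nat.sub_self, show n + n + 2 = (n + n + 1) + 1 by omega,
      Nat.factorial_succ (n + n + 1)]
    push_cast
    field_simp
    ring
  rw [sum_range_succ, sum_congr rfl hstep, sum_range_sub', hlast, sub_add_cancel, hf]
  simp

theorem integral_prod_consecutive_squares (n : ℕ) :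
    (2 / π) * ∫ x in Set.Ioi (0:ℝ), ∏ j ∈ Finset.Icc 1 (n + 1), (x ^ 2 + (j:ℝ) ^ 2)⁻¹ =
      1 / ((2 * n + 1) * n.factorial * (n + 1).factorial : ℝ) := by
  have hreindex : ∀ x : ℝ, ∏ j ∈ Icc 1 (n + 1), (x ^ 2 + (j : ℝ) ^ 2)⁻¹ =
      ∏ i ∈ range (n + 1), (x ^ 2 + ((i : ℝ) + 1) ^ 2)⁻¹ := fun x => by
    simp_rw [range_eq_Ico, ← Nat.cast_add_one]
    rw [prod_Ico_add' (fun j : ℕ => (x ^ 2 + (j : ℝ) ^ 2)⁻¹), zero_add, Ico_add_one_right_eq_Icc]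
  simp_rw [hreindex, prod_inv_sq_add_sq_succ_eq_sum]
  rw [integral_finsetSum _ fun i _ =>
    ((integrable_inv_sq_add_sq (by positivity)).integrableOn.const_mul _)]
  simp_rw [integral_const_mul, integral_Ioi_inv_sq_add_sq (Nat.cast_add_one_pos _)]
  rw [mul_sum, ← sum_range_neg_one_pow_mul_div_factorial]
  refine sum_congr rfl fun i hi => ?_
  rw [nodalWeight_neg_sq_succ (Nat.lt_add_one_iff.mp (mem_range.mp hi))]
  field_simp
end

section
/- For distinct positive reals q₁, ..., qₙ, the Matsubara sum ∑_{m=−∞}^∞ ∏_{k=1}^n 1/(m² + q_k²) equals π ∑_{k=1}^n (coth(π q_k)/q_k) ∏_{j≠k} 1/(q_j² − q_k²). -/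
/-!
Since the `q k ^ 2` are distinct, the summand splits into partial fractions in `m ^ 2`,
`∏ k, (m ^ 2 + q k ^ 2)⁻¹ = ∑ k, (m ^ 2 + q k ^ 2)⁻¹ * ∏ j ≠ k, (q j ^ 2 - q k ^ 2)⁻¹`
(Lagrange interpolation of the constant `1` at the nodes `-q k ^ 2`). This reduces the theorem
to `∑ m : ℤ, (m ^ 2 + a ^ 2)⁻¹ = π coth (π a) / a`, which is the Mittag-Leffler expansion
`π cot (π z) = 1 / z + ∑ n ≥ 1, 2 z / (z ^ 2 - n ^ 2)` at the imaginary point `z = a I`.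
-/

open Real

theorem Finset.prod_inv_add_eq_sum_inv_add_mul_prod {ι K : Type*} [DecidableEq ι] [Field K]
    {s : Finset ι} {b : ι → K} (hb : Set.InjOn b s) (hs : s.Nonempty) {x : K}
    (hx : ∀ k ∈ s, x + b k ≠ 0) :
    ∏ k ∈ s, (x + b k)⁻¹ = ∑ k ∈ s, (x + b k)⁻¹ * ∏ j ∈ s.erase k, (b j - b k)⁻¹ := by
  have hb' : Set.InjOn (-b) s := fun i hi j hj h => hb hi hj (neg_inj.mp h)
  have hx' : ∀ k ∈ s, x ≠ (-b) k := fun k hk h => hx k hk (by simp [h])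
  have barycentric := Lagrange.eval_interpolate_not_at_node (1 : ι → K) hx'
  rw [Lagrange.interpolate_one hb' hs, Polynomial.eval_one, Lagrange.eval_nodal]
    at barycentric
  simp only [Pi.neg_apply, sub_neg_eq_add, Pi.one_apply, mul_one] at barycentric
  rw [prod_inv_distrib, inv_eq_of_mul_eq_one_right barycentric.symm]
  refine sum_congr rfl fun k _ => ?_
  rw [mul_comm, Lagrange.nodalWeight]
  simp only [Pi.neg_apply, neg_sub_neg]

namespace Complex

theorem cot_mul_I (x : ℂ) : cot (x * I) = -(cosh x / sinh x) * I := by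
  rw [cot, cos_mul_I, sin_mul_I, div_mul_eq_div_div, div_I]
  ring

theorem ofReal_mul_I_mem_integerComplement {a : ℝ} (ha : a ≠ 0) :
    (a * I : ℂ) ∈ integerComplement := by
  rintro ⟨n, hn⟩
  exact ha (by simpa using (congrArg im hn).symm)

theorem hasSum_cotTerm {x : ℂ} (hx : x ∈ integerComplement) :
    HasSum (cotTerm x) (π * cot (π * x) - 1 / x) :=
  (summable_cotTerm hx).hasSum_iff_tendsto_nat.mpr (tendsto_logDeriv_euler_cot_sub hx)

theorem cotTerm_ofReal_mul_I {a : ℝ} (ha : a ≠ 0) (n : ℕ) :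
    cotTerm (a * I) n = -2 * a * I * ((((n : ℝ) + 1) ^ 2 + a ^ 2)⁻¹ : ℝ) := by
  have hsub : a * I - (n + 1) ≠ 0 := fun h => ha (by simpa using congrArg im h)
  have hadd : a * I + (n + 1) ≠ 0 := fun h => ha (by simpa using congrArg im h)
  have hnorm : ((n : ℂ) + 1) ^ 2 + a ^ 2 ≠ 0 := by
    exact_mod_cast (by positivity : ((n : ℝ) + 1) ^ 2 + a ^ 2 ≠ 0)
  simp only [cotTerm]
  push_cast
  field_simp
  ring_nf
  simp

end Complex

theorem hasSum_inv_nat_add_one_sq_add_sq {a : ℝ} (ha : a ≠ 0) :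
    HasSum (fun n : ℕ => (((n : ℝ) + 1) ^ 2 + a ^ 2)⁻¹)
      ((π * (cosh (π * a) / sinh (π * a)) / a - (a ^ 2)⁻¹) / 2) := by
  have hc : (-2 * a * Complex.I : ℂ) ≠ 0 := by simp [ha]
  have hval : (((π * (cosh (π * a) / sinh (π * a)) / a - (a ^ 2)⁻¹) / 2 : ℝ) : ℂ) =
      (-2 * a * Complex.I)⁻¹ * (π * Complex.cot (π * a * Complex.I) - 1 / (a * Complex.I)) := by
    have hsinh : (sinh (π * a) : ℂ) ≠ 0 := by exact_mod_cast (by simp [pi_ne_zero, ha])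
    have ha' : (a : ℂ) ≠ 0 := by exact_mod_cast ha
    rw [Complex.cot_mul_I]
    push_cast
    field_simp
    rw [Complex.I_sq]
    ring
  have h := Complex.hasSum_cotTerm (Complex.ofReal_mul_I_mem_integerComplement ha)
  rw [funext (Complex.cotTerm_ofReal_mul_I ha), ← mul_assoc] at h
  have h' := h.mul_left (-2 * a * Complex.I)⁻¹
  rw [← hval] at h'
  simp only [← mul_assoc, inv_mul_cancel₀ hc, one_mul] at h'
  exact Complex.hasSum_ofReal.mp h'

theorem hasSum_inv_int_sq_add_sq {a : ℝ} (ha : a ≠ 0) :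
    HasSum (fun m : ℤ => ((m : ℝ) ^ 2 + a ^ 2)⁻¹) (π * (cosh (π * a) / sinh (π * a)) / a) := by
  have h := hasSum_inv_nat_add_one_sq_add_sq ha
  have hℤ := HasSum.of_add_one_of_neg_add_one (f := fun m : ℤ => ((m : ℝ) ^ 2 + a ^ 2)⁻¹)
    (by simpa only [Int.cast_add, Int.cast_natCast, Int.cast_one] using h)
    (by simpa only [Int.cast_neg, neg_sq, Int.cast_add, Int.cast_natCast, Int.cast_one]
      using h)
  convert hℤ using 1
  field_simp
  ring

theorem matsubara_sum (n : ℕ) (q : Fin n → ℝ)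
    (hq : ∀ k, 0 < q k) (hinj : Function.Injective q) :
    ∑' m : ℤ, ∏ k, ((m:ℝ) ^ 2 + q k ^ 2)⁻¹ =
      π * ∑ k, (Real.cosh (π * q k) / Real.sinh (π * q k)) / q k *
        ∏ j ∈ Finset.univ.erase k, (q j ^ 2 - q k ^ 2)⁻¹ := by
  rcases isEmpty_or_nonempty (Fin n) with _ | _
  · -- `∑' m : ℤ, 1` diverges, so its `tsum` is the junk value `0`
    simp [tsum_const]
  have hsq : Set.InjOn (fun k => q k ^ 2) (Finset.univ : Finset (Fin n)) := fun j _ k _ h =>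
    hinj ((sq_eq_sq₀ (hq j).le (hq k).le).mp h)
  have hpf (m : ℤ) := Finset.prod_inv_add_eq_sum_inv_add_mul_prod hsq Finset.univ_nonempty
    (x := (m : ℝ) ^ 2) fun k _ => by positivity [hq k]
  have hsum := hasSum_sum fun k (_ : k ∈ Finset.univ) =>
    (hasSum_inv_int_sq_add_sq (hq k).ne').mul_right
      (∏ j ∈ Finset.univ.erase k, (q j ^ 2 - q k ^ 2)⁻¹)
  rw [tsum_congr hpf, hsum.tsum_eq, Finset.mul_sum]
  exact Finset.sum_congr rfl fun k _ => by ring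
end
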